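/- arXiv:2102.01514 — 5 statements merged into one kernel-verified Lean document; each statement's English description precedes it below -/
import Mathlib

section
/- Let S be a pseudometric space, A a nonempty finite type, and V_max ≥ 0. Let π : S → A → ℝ satisfy π(s,a) ≥ 0 and ∑_{a ∈ A} π(s,a) = 1 for every s, with each map s ↦ π(s,a) Lipschitz with constant L_π ≥ 0; let Q : S → A → ℝ satisfy 0 ≤ Q(s,a) ≤ V_max with each map s ↦ Q(s,a) Lipschitz with constant L_Q ≥ 0. Then V(s) = ∑_{a ∈ A} π(s,a)·Q(s,a) is Lipschitz with constant (card A)·V_max·L_π + L_Q. -/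
theorem stmt5 {S A : Type*} [PseudoMetricSpace S] [Fintype A] [Nonempty A]
    (Vmax : ℝ) (hVmax : 0 ≤ Vmax)
    (π : S → A → ℝ) (hπ0 : ∀ s a, 0 ≤ π s a) (hπ1 : ∀ s, ∑ a, π s a = 1)
    (Lπ : ℝ) (hLπ : 0 ≤ Lπ)
    (hπLip : ∀ a : A, ∀ x y : S, dist (π x a) (π y a) ≤ Lπ * dist x y)
    (Q : S → A → ℝ) (hQ0 : ∀ s a, 0 ≤ Q s a) (hQV : ∀ s a, Q s a ≤ Vmax)
    (LQ : ℝ) (hLQ : 0 ≤ LQ)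
    (hQLip : ∀ a : A, ∀ x y : S, dist (Q x a) (Q y a) ≤ LQ * dist x y) :
    ∀ x y : S,
      dist (∑ a, π x a * Q x a) (∑ a, π y a * Q y a) ≤
        ((Fintype.card A : ℝ) * Vmax * Lπ + LQ) * dist x y := by
  intro x y
  have key : ∀ a : A, dist (π x a * Q x a) (π y a * Q y a) ≤
      Vmax * Lπ * dist x y + π y a * (LQ * dist x y) := by
    intro a
    have h1 : dist (π x a * Q x a) (π y a * Q y a) ≤
        dist (π x a * Q x a) (π y a * Q x a) + dist (π y a * Q x a) (π y a * Q y a) :=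
      dist_triangle _ _ _
    have h2 : dist (π x a * Q x a) (π y a * Q x a) ≤ Vmax * (Lπ * dist x y) := by
      rw [Real.dist_eq]
      have : |π x a * Q x a - π y a * Q x a| = |π x a - π y a| * |Q x a| := by
        rw [← abs_mul]; ring_nf
      rw [this]
      have hq : |Q x a| ≤ Vmax := by
        rw [abs_of_nonneg (hQ0 x a)]; exact hQV x a
      calc |π x a - π y a| * |Q x a| ≤ (Lπ * dist x y) * Vmax := by
            apply mul_le_mul (hπLip a x y) hq (abs_nonneg _)
            positivity
        _ = Vmax * (Lπ * dist x y) := by ring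
    have h3 : dist (π y a * Q x a) (π y a * Q y a) ≤ π y a * (LQ * dist x y) := by
      rw [Real.dist_eq]
      have : |π y a * Q x a - π y a * Q y a| = |π y a| * |Q x a - Q y a| := by
        rw [← abs_mul]; ring_nf
      rw [this, abs_of_nonneg (hπ0 y a)]
      exact mul_le_mul_of_nonneg_left (hQLip a x y) (hπ0 y a)
    linarith
  calc dist (∑ a, π x a * Q x a) (∑ a, π y a * Q y a)
      ≤ ∑ a, dist (π x a * Q x a) (π y a * Q y a) := dist_sum_sum_le _ _ _
    _ ≤ ∑ a, (Vmax * Lπ * dist x y + π y a * (LQ * dist x y)) :=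
        Finset.sum_le_sum (fun a _ => key a)
    _ = (Fintype.card A : ℝ) * (Vmax * Lπ * dist x y) + (∑ a, π y a) * (LQ * dist x y) := by
        rw [Finset.sum_add_distrib, Finset.sum_const, nsmul_eq_mul, ← Finset.sum_mul]
        rfl
    _ = ((Fintype.card A : ℝ) * Vmax * Lπ + LQ) * dist x y := by
        rw [hπ1 y]; ring
end

section
/- Let S be a metric space, A a nonempty finite type, and γ ∈ [0,1). Let R : S → A → ℝ be bounded with s ↦ R(s,a) continuous for every a, and let P : S → A → ProbabilityMeasure(S) be such that for every a the map s ↦ P(s,a) is continuous with respect to the topology of weak convergence of probability measures. Suppose Q : S → A → ℝ is bounded, each s ↦ Q(s,a) is Borel measurable, and Q satisfies the Bellman optimality equation Q(s,a) = R(s,a) + γ·∫ (max_{a' ∈ A} Q(s',a')) dP(s,a)(s') for all (s,a). Then for every a ∈ A the function s ↦ Q(s,a) is continuous. -/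
open MeasureTheory

private lemma sup'_abs_sub_le' {A : Type*} [Fintype A] [Nonempty A] (u v : A → ℝ) (C : ℝ)
    (h : ∀ a, |u a - v a| ≤ C) :
    |Finset.univ.sup' Finset.univ_nonempty u - Finset.univ.sup' Finset.univ_nonempty v| ≤ C := by
  rw [abs_sub_le_iff]
  constructor
  · rw [sub_le_iff_le_add]
    apply Finset.sup'_le
    intro a _
    have h1 := (abs_sub_le_iff.mp (h a)).1
    have h2 : v a ≤ Finset.univ.sup' Finset.univ_nonempty v :=
      Finset.le_sup' v (Finset.mem_univ a)
    linarith
  · rw [sub_le_iff_le_add]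
    apply Finset.sup'_le
    intro a _
    have h1 := (abs_sub_le_iff.mp (h a)).2
    have h2 : u a ≤ Finset.univ.sup' Finset.univ_nonempty u :=
      Finset.le_sup' u (Finset.mem_univ a)
    linarith

noncomputable def bellIter {S : Type*} [MetricSpace S] [MeasurableSpace S]
    {A : Type*} [Fintype A] [Nonempty A]
    (γ : ℝ) (R : S → A → ℝ) (P : S → A → ProbabilityMeasure S) : ℕ → S → A → ℝ
  | 0 => fun _ _ => 0
  | n + 1 => fun s a => R s a +
      γ * ∫ s', (Finset.univ.sup' Finset.univ_nonempty fun a' => bellIter γ R P n s' a')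
        ∂(P s a : Measure S)

theorem stmt9 {S : Type*} [MetricSpace S] [MeasurableSpace S] [BorelSpace S]
    {A : Type*} [Fintype A] [Nonempty A]
    (γ : ℝ) (hγ0 : 0 ≤ γ) (hγ1 : γ < 1)
    (R : S → A → ℝ) (CR : ℝ) (hRb : ∀ s a, |R s a| ≤ CR)
    (hRc : ∀ a : A, Continuous fun s => R s a)
    (P : S → A → ProbabilityMeasure S)
    (hPc : ∀ a : A, Continuous fun s => P s a)
    (Q : S → A → ℝ) (CQ : ℝ) (hQb : ∀ s a, |Q s a| ≤ CQ)
    (hQm : ∀ a : A, Measurable fun s => Q s a)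
    (hBellman : ∀ s a, Q s a = R s a +
      γ * ∫ s', (Finset.univ.sup' Finset.univ_nonempty fun a' => Q s' a')
        ∂(P s a : Measure S)) :
    ∀ a : A, Continuous fun s => Q s a := by
  classical
  set C : ℝ := max CQ 0 with hC
  have hC0 : 0 ≤ C := le_max_right _ _
  have hCQ : CQ ≤ C := le_max_left _ _
  set V : S → ℝ := fun s => Finset.univ.sup' Finset.univ_nonempty fun a' => Q s a' with hVdef
  have hVm : Measurable V := by
    have h := Finset.measurable_sup' (f := fun (a : A) (s : S) => Q s a)
      Finset.univ_nonempty fun a _ => hQm a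
    convert h using 1
    ext s
    simp [Finset.sup'_apply]
    rfl
  have hVb : ∀ s, |V s| ≤ C := by
    intro s
    rw [abs_le]
    obtain ⟨a⟩ := ‹Nonempty A›
    constructor
    · have h1 : Q s a ≤ V s := Finset.le_sup' (fun a' => Q s a') (Finset.mem_univ a)
      have h2 := abs_le.mp (hQb s a)
      linarith
    · apply Finset.sup'_le
      intro b _
      have := abs_le.mp (hQb s b)
      linarith
  have hVint : ∀ s a, Integrable V (P s a : Measure S) := by
    intro s a
    refine (integrable_const C).mono' hVm.aestronglyMeasurable ?_
    exact Filter.Eventually.of_forall fun x => by simpa using hVb x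
  -- joint induction: continuity and contraction bound
  have key : ∀ n : ℕ, (∀ a, Continuous fun s => bellIter γ R P n s a) ∧
      (∀ s a, |bellIter γ R P n s a - Q s a| ≤ γ ^ n * C) := by
    intro n
    induction n with
    | zero =>
      refine ⟨fun a => continuous_const, fun s a => ?_⟩
      simp only [bellIter, pow_zero, one_mul, zero_sub, abs_neg]
      exact (hQb s a).trans hCQ
    | succ n ih =>
      obtain ⟨ihc, ihb⟩ := ih
      set Vn : S → ℝ := fun s' =>
        Finset.univ.sup' Finset.univ_nonempty fun a' => bellIter γ R P n s' a' with hVn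
      have hdiff : ∀ s', |Vn s' - V s'| ≤ γ ^ n * C :=
        fun s' => sup'_abs_sub_le' _ _ _ (fun a' => ihb s' a')
      have hVnb : ∀ s', |Vn s'| ≤ γ ^ n * C + C := by
        intro s'
        calc |Vn s'| = |(Vn s' - V s') + V s'| := by ring_nf
          _ ≤ |Vn s' - V s'| + |V s'| := abs_add_le _ _
          _ ≤ γ ^ n * C + C := add_le_add (hdiff s') (hVb s')
      have hVnc : Continuous Vn := by
        rw [continuous_iff_continuousAt]
        intro x
        exact ContinuousAt.finset_sup'_apply Finset.univ_nonempty
          fun a' _ => (ihc a').continuousAt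
      set f : BoundedContinuousFunction S ℝ :=
        BoundedContinuousFunction.ofNormedAddCommGroup Vn hVnc (γ ^ n * C + C)
          (fun s' => by simpa using hVnb s') with hf
      have hVnint : ∀ s a, Integrable Vn (P s a : Measure S) := by
        intro s a
        refine (integrable_const (γ ^ n * C + C)).mono'
          (hVnc.measurable).aestronglyMeasurable ?_
        exact Filter.Eventually.of_forall fun x => by simpa using hVnb x
      constructor
      · intro a
        have hint : Continuous fun s => ∫ s', Vn s' ∂(P s a : Measure S) := by
          have h1 : Continuous fun μ : ProbabilityMeasure S => ∫ x, f x ∂(μ : Measure S) :=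
            MeasureTheory.ProbabilityMeasure.continuous_integral_boundedContinuousFunction f
          exact h1.comp (hPc a)
        show Continuous fun s => R s a + γ * ∫ s', Vn s' ∂(P s a : Measure S)
        exact (hRc a).add (continuous_const.mul hint)
      · intro s a
        have heq : bellIter γ R P (n + 1) s a - Q s a =
            γ * ∫ s', (Vn s' - V s') ∂(P s a : Measure S) := by
          rw [integral_sub (hVnint s a) (hVint s a)]
          show (R s a + γ * ∫ s', Vn s' ∂(P s a : Measure S)) - Q s a = _
          rw [hBellman s a]
          ring
        rw [heq, abs_mul, abs_of_nonneg hγ0]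
        have hle : |∫ s', (Vn s' - V s') ∂(P s a : Measure S)| ≤ γ ^ n * C := by
          have := MeasureTheory.norm_integral_le_of_norm_le_const
            (μ := (P s a : Measure S)) (f := fun s' => Vn s' - V s') (C := γ ^ n * C)
            (Filter.Eventually.of_forall fun x => by simpa using hdiff x)
          simpa using this
        calc γ * |∫ s', (Vn s' - V s') ∂(P s a : Measure S)| ≤ γ * (γ ^ n * C) :=
              mul_le_mul_of_nonneg_left hle hγ0
          _ = γ ^ (n + 1) * C := by ring
  -- uniform convergence
  intro a
  have hunif : TendstoUniformly (fun n s => bellIter γ R P n s a) (fun s => Q s a)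
      Filter.atTop := by
    rw [Metric.tendstoUniformly_iff]
    intro ε hε
    have htend : Filter.Tendsto (fun n => γ ^ n * C) Filter.atTop (nhds 0) := by
      simpa using (tendsto_pow_atTop_nhds_zero_of_lt_one hγ0 hγ1).mul_const C
    have : ∀ᶠ n in Filter.atTop, γ ^ n * C < ε := by
      have := htend.eventually (eventually_lt_nhds hε)
      simpa using this
    filter_upwards [this] with n hn s
    have := (key n).2 s a
    rw [Real.dist_eq]
    calc |Q s a - bellIter γ R P n s a| = |bellIter γ R P n s a - Q s a| := abs_sub_comm _ _
      _ ≤ γ ^ n * C := this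
      _ < ε := hn
  exact hunif.continuous (Filter.Eventually.of_forall (f := Filter.atTop) fun n => (key n).1 a).frequently
end

section
/- Let S be a metric space, A a nonempty finite type, and γ ∈ [0,1). Let R : S → A → ℝ be bounded with s ↦ R(s,a) continuous for every a, and let P : S → A → ProbabilityMeasure(S) be such that for every a the map s ↦ P(s,a) is continuous with respect to the topology of weak convergence of probability measures. Let π : S → A → ℝ satisfy π(s,a) ≥ 0 and ∑_{a ∈ A} π(s,a) = 1 for every s, with each s ↦ π(s,a) continuous. Suppose Q : S → A → ℝ is bounded, each s ↦ Q(s,a) is Borel measurable, and Q satisfies the Bellman evaluation equation Q(s,a) = R(s,a) + γ·∫ (∑_{a' ∈ A} π(s',a')·Q(s',a')) dP(s,a)(s') for all (s,a). Then for every a ∈ A the function s ↦ Q(s,a) is continuous. -/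
open MeasureTheory

theorem stmt10 {S : Type*} [MetricSpace S] [MeasurableSpace S] [BorelSpace S]
    {A : Type*} [Fintype A] [Nonempty A]
    (γ : ℝ) (hγ0 : 0 ≤ γ) (hγ1 : γ < 1)
    (R : S → A → ℝ) (CR : ℝ) (hRb : ∀ s a, |R s a| ≤ CR)
    (hRc : ∀ a : A, Continuous fun s => R s a)
    (P : S → A → ProbabilityMeasure S)
    (hPc : ∀ a : A, Continuous fun s => P s a)
    (π : S → A → ℝ) (hπ0 : ∀ s a, 0 ≤ π s a) (hπ1 : ∀ s, ∑ a, π s a = 1)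
    (hπc : ∀ a : A, Continuous fun s => π s a)
    (Q : S → A → ℝ) (CQ : ℝ) (hQb : ∀ s a, |Q s a| ≤ CQ)
    (hQm : ∀ a : A, Measurable fun s => Q s a)
    (hBellman : ∀ s a, Q s a = R s a +
      γ * ∫ s', (∑ a', π s' a' * Q s' a') ∂(P s a : Measure S)) :
    ∀ a : A, Continuous fun s => Q s a := by
  -- the value aggregation
  set V : (S → A → ℝ) → S → ℝ := fun f s' => ∑ a', π s' a' * f s' a' with hV
  -- bound transfer:
  have hVb : ∀ (f : S → A → ℝ) (C : ℝ), (∀ s a, |f s a| ≤ C) → ∀ s', |V f s'| ≤ C := by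
    intro f C hf s'
    calc |∑ a', π s' a' * f s' a'| ≤ ∑ a', |π s' a' * f s' a'| := Finset.abs_sum_le_sum_abs _ _
      _ ≤ ∑ a', π s' a' * C := by
          refine Finset.sum_le_sum fun a' _ => ?_
          rw [abs_mul, abs_of_nonneg (hπ0 s' a')]
          exact mul_le_mul_of_nonneg_left (hf s' a') (hπ0 s' a')
      _ = C := by rw [← Finset.sum_mul, hπ1 s', one_mul]
  -- integrability of bounded a.e.-strongly-measurable functions wrt probability measures
  have hInt : ∀ (g : S → ℝ) (C : ℝ) (μ : ProbabilityMeasure S),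
      AEStronglyMeasurable g (μ : Measure S) → (∀ s', |g s'| ≤ C) →
      Integrable g (μ : Measure S) := by
    intro g C μ hm hb
    exact (integrable_const C).mono' hm (Filter.Eventually.of_forall fun s' => by
      simpa [Real.norm_eq_abs] using hb s')
  have hVQm : Measurable (V Q) :=
    Finset.measurable_sum _ fun a' _ => ((hπc a').measurable).mul (hQm a')
  -- the Bellman operator
  set T : (S → A → ℝ) → S → A → ℝ :=
    fun f s a => R s a + γ * ∫ s', V f s' ∂(P s a : Measure S) with hT
  set Qn : ℕ → S → A → ℝ := fun n => T^[n] (fun _ _ => 0) with hQn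
  have hQnsucc : ∀ n, Qn (n + 1) = T (Qn n) := fun n => by
    simp only [hQn, Function.iterate_succ_apply']
  -- each iterate is continuous and bounded
  have hreg : ∀ n, (∀ a, Continuous fun s => Qn n s a) ∧ ∃ C, ∀ s a, |Qn n s a| ≤ C := by
    intro n
    induction n with
    | zero => exact ⟨fun a => continuous_const, 0, fun s a => by simp [hQn]⟩
    | succ n ih =>
      obtain ⟨hc, C, hb⟩ := ih
      have hVc : Continuous (V (Qn n)) :=
        continuous_finset_sum _ fun a' _ => (hπc a').mul (hc a')
      have hVbd := hVb (Qn n) C hb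
      set g : BoundedContinuousFunction S ℝ := BoundedContinuousFunction.ofNormedAddCommGroup (V (Qn n)) hVc C
        (fun s' => by simpa [Real.norm_eq_abs] using hVbd s') with hg
      constructor
      · intro a
        have hcont : Continuous fun s => ∫ s', V (Qn n) s' ∂(P s a : Measure S) := by
          have : (fun s => ∫ s', V (Qn n) s' ∂(P s a : Measure S)) =
              (fun μ : ProbabilityMeasure S => ∫ x, g x ∂(μ : Measure S)) ∘ (fun s => P s a) := by
            rfl
          rw [this]
          exact (ProbabilityMeasure.continuous_integral_boundedContinuousFunction g).comp (hPc a)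
        rw [hQnsucc n]
        exact (hRc a).add (continuous_const.mul hcont)
      · refine ⟨CR + γ * C, fun s a => ?_⟩
        rw [hQnsucc n]
        calc |R s a + γ * ∫ s', V (Qn n) s' ∂(P s a : Measure S)|
            ≤ |R s a| + |γ * ∫ s', V (Qn n) s' ∂(P s a : Measure S)| := abs_add_le _ _
          _ ≤ CR + γ * C := by
              refine add_le_add (hRb s a) ?_
              rw [abs_mul, abs_of_nonneg hγ0]
              refine mul_le_mul_of_nonneg_left ?_ hγ0
              have := norm_integral_le_of_norm_le_const (μ := (P s a : Measure S))
                (f := V (Qn n)) (C := C)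
                (Filter.Eventually.of_forall fun s' => by
                  simpa [Real.norm_eq_abs] using hVbd s')
              simpa [Real.norm_eq_abs] using this
  -- geometric error bound
  have herr : ∀ n s a, |Qn n s a - Q s a| ≤ γ ^ n * CQ := by
    intro n
    induction n with
    | zero => intro s a; simpa [hQn] using hQb s a
    | succ n ih =>
      intro s a
      obtain ⟨hc, C, hb⟩ := hreg n
      have hVc : Continuous (V (Qn n)) :=
        continuous_finset_sum _ fun a' _ => (hπc a').mul (hc a')
      have hint1 : Integrable (V (Qn n)) (P s a : Measure S) :=
        hInt _ C _ hVc.aestronglyMeasurable (hVb (Qn n) C hb)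
      have hint2 : Integrable (V Q) (P s a : Measure S) :=
        hInt _ CQ _ hVQm.aestronglyMeasurable (hVb Q CQ hQb)
      have key : Qn (n + 1) s a - Q s a
          = γ * ∫ s', (V (Qn n) s' - V Q s') ∂(P s a : Measure S) := by
        rw [hQnsucc n, integral_sub hint1 hint2]
        simp only [hT]
        rw [hBellman s a]
        ring
      have hdiff : ∀ s', |V (Qn n) s' - V Q s'| ≤ γ ^ n * CQ := by
        intro s'
        have : V (Qn n) s' - V Q s' = V (fun s a => Qn n s a - Q s a) s' := by
          simp only [hV, ← Finset.sum_sub_distrib, mul_sub]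
        rw [this]
        exact hVb _ _ ih s'
      rw [key, abs_mul, abs_of_nonneg hγ0, pow_succ, mul_comm (γ ^ n) γ, mul_assoc]
      refine mul_le_mul_of_nonneg_left ?_ hγ0
      have := norm_integral_le_of_norm_le_const (μ := (P s a : Measure S))
        (f := fun s' => V (Qn n) s' - V Q s') (C := γ ^ n * CQ)
        (Filter.Eventually.of_forall fun s' => by
          simpa [Real.norm_eq_abs] using hdiff s')
      simpa [Real.norm_eq_abs] using this
  -- uniform convergence
  intro a
  have htend : Filter.Tendsto (fun n => γ ^ n * CQ) Filter.atTop (nhds 0) := by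
    have := (tendsto_pow_atTop_nhds_zero_of_lt_one hγ0 hγ1).mul_const CQ
    simpa using this
  have hunif : TendstoUniformly (fun n s => Qn n s a) (fun s => Q s a) Filter.atTop := by
    rw [Metric.tendstoUniformly_iff]
    intro ε hε
    filter_upwards [htend.eventually (gt_mem_nhds hε)] with n hn s
    rw [Real.dist_eq, abs_sub_comm]
    exact lt_of_le_of_lt (herr n s a) hn
  exact hunif.continuous (Filter.Eventually.of_forall fun n => (hreg n).1 a).frequently
end

section
/- Let S be a metric space, A a nonempty finite type, and γ ∈ [0,1). Let R : S → A → ℝ be bounded with s ↦ R(s,a) continuous for every a, and let P : S → A → ProbabilityMeasure(S) be such that for every a the map s ↦ P(s,a) is continuous with respect to the topology of weak convergence of probability measures. For a bounded continuous function f : S × A → ℝ, define (Tf)(s,a) = R(s,a) + γ·∫ (max_{a' ∈ A} f(s',a')) dP(s,a)(s'). Then: (i) Tf is bounded and continuous (A given the discrete topology); and (ii) for all bounded continuous f, g : S × A → ℝ, sup_{(s,a)} |Tf(s,a) − Tg(s,a)| ≤ γ · sup_{(s,a)} |f(s,a) − g(s,a)|; i.e., T is a γ-contraction in the supremum norm on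 bounded continuous functions. -/
/-!
Taking the maximum over the finitely many actions is continuous and 1-Lipschitz for the sup norm,
and integrating against a probability measure is a weak contraction that, by the definition of
weak convergence, depends continuously on the measure when the integrand is bounded and
continuous. Composing these with the affine map `x ↦ R + γ x` gives both claims.
-/

open MeasureTheory

/-- The Bellman optimality operator of the MDP `(S, A, R, P, γ)`:
`(Tf)(s,a) = R(s,a) + γ·∫ (max_{a'} f(s',a')) dP(s,a)(s')`. -/
noncomputable def bellmanT {S : Type*} [MeasurableSpace S]
    {A : Type*} [Fintype A] [Nonempty A]
    (R : S → A → ℝ) (P : S → A → ProbabilityMeasure S) (γ : ℝ)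
    (f : S × A → ℝ) : S × A → ℝ :=
  fun p => R p.1 p.2 +
    γ * ∫ s', (Finset.univ.sup' Finset.univ_nonempty fun a' => f (s', a'))
      ∂(P p.1 p.2 : Measure S)

lemma Finset.abs_sup'_le {ι : Type*} {s : Finset ι} (hs : s.Nonempty) {f : ι → ℝ} {C : ℝ}
    (hf : ∀ i ∈ s, |f i| ≤ C) : |s.sup' hs f| ≤ C := by
  obtain ⟨i, hi⟩ := hs
  refine abs_le.2 ⟨?_, Finset.sup'_le _ _ fun j hj => (abs_le.1 (hf j hj)).2⟩
  exact ((abs_le.1 (hf i hi)).1).trans (Finset.le_sup' f hi)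

lemma Finset.abs_sup'_sub_sup'_le {ι : Type*} {s : Finset ι} (hs : s.Nonempty) {f g : ι → ℝ}
    {C : ℝ} (hfg : ∀ i ∈ s, |f i - g i| ≤ C) : |s.sup' hs f - s.sup' hs g| ≤ C := by
  have sup'_le_sup'_add : ∀ u v : ι → ℝ, (∀ i ∈ s, u i ≤ v i + C) →
      s.sup' hs u ≤ s.sup' hs v + C := fun u v huv =>
    Finset.sup'_le _ _ fun i hi => (huv i hi).trans (by gcongr; exact Finset.le_sup' v hi)
  rw [abs_sub_le_iff]
  constructor
  · linarith [sup'_le_sup'_add f g fun i hi => by linarith [(abs_le.1 (hfg i hi)).2]]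
  · linarith [sup'_le_sup'_add g f fun i hi => by linarith [(abs_le.1 (hfg i hi)).1]]

section Integral

variable {X : Type*} [MeasurableSpace X] {μ : Measure X} [IsProbabilityMeasure μ]

lemma abs_integral_le_of_abs_le {F : X → ℝ} {C : ℝ} (hF : ∀ x, |F x| ≤ C) :
    |∫ x, F x ∂μ| ≤ C := by
  simpa using norm_integral_le_of_norm_le_const (μ := μ) (f := F) (Filter.Eventually.of_forall hF)

lemma abs_integral_sub_integral_le {F G : X → ℝ} (hF : Integrable F μ) (hG : Integrable G μ)
    {C : ℝ} (hFG : ∀ x, |F x - G x| ≤ C) : |∫ x, F x ∂μ - ∫ x, G x ∂μ| ≤ C := by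
  rw [← integral_sub hF hG]
  exact abs_integral_le_of_abs_le hFG

end Integral

lemma ProbabilityMeasure.continuous_integral_of_continuous_of_abs_le {Y X : Type*}
    [TopologicalSpace Y] [TopologicalSpace X] [MeasurableSpace X] [OpensMeasurableSpace X]
    {P : Y → ProbabilityMeasure X} (hP : Continuous P) {F : X → ℝ} (hF : Continuous F)
    {C : ℝ} (hC : ∀ x, |F x| ≤ C) : Continuous fun y => ∫ x, F x ∂(P y : Measure X) :=
  (ProbabilityMeasure.continuous_integral_boundedContinuousFunction
    (BoundedContinuousFunction.ofNormedAddCommGroup F hF C hC)).comp hP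

section Bellman

variable {S A : Type*} [Fintype A] [Nonempty A]

noncomputable def maxOverActions (f : S × A → ℝ) (s : S) : ℝ :=
  Finset.univ.sup' Finset.univ_nonempty fun a => f (s, a)

lemma continuous_maxOverActions [TopologicalSpace S] [TopologicalSpace A] {f : S × A → ℝ}
    (hf : Continuous f) : Continuous (maxOverActions f) :=
  Continuous.finset_sup'_apply _ fun a _ => hf.comp (Continuous.prodMk_left a)

lemma abs_maxOverActions_le {f : S × A → ℝ} {C : ℝ} (hC : ∀ p, |f p| ≤ C) (s : S) :
    |maxOverActions f s| ≤ C :=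
  Finset.abs_sup'_le _ fun a _ => hC (s, a)

lemma abs_maxOverActions_sub_le {f g : S × A → ℝ} {C : ℝ} (hC : ∀ p, |f p - g p| ≤ C)
    (s : S) : |maxOverActions f s - maxOverActions g s| ≤ C :=
  Finset.abs_sup'_sub_sup'_le _ fun a _ => hC (s, a)

variable [MeasurableSpace S]

lemma integrable_maxOverActions [TopologicalSpace S] [OpensMeasurableSpace S]
    [TopologicalSpace A] {f : S × A → ℝ} (hf : Continuous f) {C : ℝ}
    (hC : ∀ p, |f p| ≤ C) (μ : Measure S) [IsFiniteMeasure μ] :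
    Integrable (maxOverActions f) μ :=
  .of_bound (continuous_maxOverActions hf).aestronglyMeasurable C
    (Filter.Eventually.of_forall (abs_maxOverActions_le hC))

variable {R : S → A → ℝ} {P : S → A → ProbabilityMeasure S} {γ : ℝ}

lemma bellmanT_apply (f : S × A → ℝ) (p : S × A) :
    bellmanT R P γ f p =
      R p.1 p.2 + γ * ∫ s', maxOverActions f s' ∂(P p.1 p.2 : Measure S) :=
  rfl

lemma abs_bellmanT_le (hγ : 0 ≤ γ) {CR : ℝ} (hR : ∀ s a, |R s a| ≤ CR) {f : S × A → ℝ}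
    {C : ℝ} (hC : ∀ p, |f p| ≤ C) (p : S × A) : |bellmanT R P γ f p| ≤ CR + γ * C := by
  rw [bellmanT_apply]
  refine (abs_add_le _ _).trans (add_le_add (hR _ _) ?_)
  rw [abs_mul, abs_of_nonneg hγ]
  exact mul_le_mul_of_nonneg_left (abs_integral_le_of_abs_le (abs_maxOverActions_le hC)) hγ

lemma continuous_bellmanT [TopologicalSpace S] [OpensMeasurableSpace S] [TopologicalSpace A]
    [DiscreteTopology A] (hR : ∀ a, Continuous fun s => R s a)
    (hP : ∀ a, Continuous fun s => P s a) {f : S × A → ℝ} (hf : Continuous f) {C : ℝ}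
    (hC : ∀ p, |f p| ≤ C) : Continuous (bellmanT R P γ f) :=
  continuous_prod_of_discrete_right.2 fun a => (hR a).add (continuous_const.mul
    (ProbabilityMeasure.continuous_integral_of_continuous_of_abs_le (hP a)
      (continuous_maxOverActions hf) (abs_maxOverActions_le hC)))

lemma abs_bellmanT_sub_bellmanT_le [TopologicalSpace S] [OpensMeasurableSpace S]
    [TopologicalSpace A] (hγ : 0 ≤ γ) {f g : S × A → ℝ}
    (hf : Continuous f) {Cf : ℝ} (hCf : ∀ p, |f p| ≤ Cf)
    (hg : Continuous g) {Cg : ℝ} (hCg : ∀ p, |g p| ≤ Cg)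
    {M : ℝ} (hM : ∀ p, |f p - g p| ≤ M) (p : S × A) :
    |bellmanT R P γ f p - bellmanT R P γ g p| ≤ γ * M := by
  rw [bellmanT_apply, bellmanT_apply, add_sub_add_left_eq_sub, ← mul_sub, abs_mul,
    abs_of_nonneg hγ]
  exact mul_le_mul_of_nonneg_left (abs_integral_sub_integral_le
    (integrable_maxOverActions hf hCf _) (integrable_maxOverActions hg hCg _)
    (abs_maxOverActions_sub_le hM)) hγ

end Bellman

theorem stmt11_general {S : Type*} [MetricSpace S] [MeasurableSpace S] [BorelSpace S]
    {A : Type*} [Fintype A] [Nonempty A] [TopologicalSpace A] [DiscreteTopology A]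
    (γ : ℝ) (hγ0 : 0 ≤ γ)
    (R : S → A → ℝ) (CR : ℝ) (hRb : ∀ s a, |R s a| ≤ CR)
    (hRc : ∀ a : A, Continuous fun s => R s a)
    (P : S → A → ProbabilityMeasure S)
    (hPc : ∀ a : A, Continuous fun s => P s a) :
    (∀ f : S × A → ℝ, Continuous f → (∃ C, ∀ p, |f p| ≤ C) →
      (∃ C, ∀ p, |bellmanT R P γ f p| ≤ C) ∧ Continuous (bellmanT R P γ f)) ∧
    (∀ f g : S × A → ℝ, Continuous f → (∃ C, ∀ p, |f p| ≤ C) →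
      Continuous g → (∃ C, ∀ p, |g p| ≤ C) →
      (⨆ p : S × A, |bellmanT R P γ f p - bellmanT R P γ g p|) ≤
        γ * ⨆ p : S × A, |f p - g p|) := by
  refine ⟨fun f hf ⟨C, hC⟩ => ⟨⟨CR + γ * C, abs_bellmanT_le hγ0 hRb hC⟩,
    continuous_bellmanT hRc hPc hf hC⟩, ?_⟩
  rintro f g hf ⟨Cf, hCf⟩ hg ⟨Cg, hCg⟩
  have hbdd : BddAbove (Set.range fun p => |f p - g p|) :=
    ⟨Cf + Cg, Set.forall_mem_range.2 fun p =>
      (abs_sub _ _).trans (add_le_add (hCf p) (hCg p))⟩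
  exact Real.iSup_le
    (abs_bellmanT_sub_bellmanT_le hγ0 hf hCf hg hCg (le_ciSup hbdd))
    (mul_nonneg hγ0 (Real.iSup_nonneg fun _ => abs_nonneg _))

theorem stmt11 {S : Type*} [MetricSpace S] [MeasurableSpace S] [BorelSpace S]
    {A : Type*} [Fintype A] [Nonempty A] [TopologicalSpace A] [DiscreteTopology A]
    (γ : ℝ) (hγ0 : 0 ≤ γ) (hγ1 : γ < 1)
    (R : S → A → ℝ) (CR : ℝ) (hRb : ∀ s a, |R s a| ≤ CR)
    (hRc : ∀ a : A, Continuous fun s => R s a)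
    (P : S → A → ProbabilityMeasure S)
    (hPc : ∀ a : A, Continuous fun s => P s a) :
    (∀ f : S × A → ℝ, Continuous f → (∃ C, ∀ p, |f p| ≤ C) →
      (∃ C, ∀ p, |bellmanT R P γ f p| ≤ C) ∧ Continuous (bellmanT R P γ f)) ∧
    (∀ f g : S × A → ℝ, Continuous f → (∃ C, ∀ p, |f p| ≤ C) →
      Continuous g → (∃ C, ∀ p, |g p| ≤ C) →
      (⨆ p : S × A, |bellmanT R P γ f p - bellmanT R P γ g p|) ≤
        γ * ⨆ p : S × A, |f p - g p|) :=
  stmt11_general γ hγ0 R CR hRb hRc P hPc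
end

section
/- Let S and A be nonempty finite types, γ ∈ [0,1), R : S → A → ℝ a reward function, and P : S → A → S → ℝ a transition function with P(s,a,s') ≥ 0 and ∑_{s'} P(s,a,s') = 1 for all s,a. Let Q : S → A → ℝ satisfy the Bellman optimality equation Q(s,a) = R(s,a) + γ·∑_{s'} P(s,a,s')·(max_{a'} Q(s',a')) for all (s,a). Let E be an equivalence relation on S that is a bisimulation relation: whenever E(s,t), for every action a ∈ A one has R(s,a) = R(t,a), and ∑_{s' ∈ X} P(s,a,s') = ∑_{s' ∈ X} P(t,a,s') for every subset X ⊆ S that is closed under E (i.e. s' ∈ X and E(s',t') imply t' ∈ X). Then E(s,t) implies Q(s,a) = Q(t,a) for every a ∈ A. -/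
theorem stmt19 {S A : Type*} [Fintype S] [Fintype A] [Nonempty A]
    (γ : ℝ) (hγ0 : 0 ≤ γ) (hγ1 : γ < 1)
    (R : S → A → ℝ) (P : S → A → S → ℝ)
    (hP0 : ∀ s a s', 0 ≤ P s a s') (hP1 : ∀ s a, ∑ s', P s a s' = 1)
    (Q : S → A → ℝ)
    (hBellman : ∀ s a, Q s a = R s a + γ * ∑ s', P s a s' *
      Finset.univ.sup' Finset.univ_nonempty (fun a' => Q s' a'))
    (E : S → S → Prop) (hE : Equivalence E)
    (hR : ∀ s t, E s t → ∀ a, R s a = R t a)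
    (hP : ∀ s t, E s t → ∀ a, ∀ X : Finset S,
      (∀ s' ∈ X, ∀ t' : S, E s' t' → t' ∈ X) →
      ∑ s' ∈ X, P s a s' = ∑ s' ∈ X, P t a s') :
    ∀ s t : S, E s t → ∀ a : A, Q s a = Q t a := by
  classical
  intro s₀ t₀ hst₀ a₀
  haveI : Nonempty S := ⟨s₀⟩
  set V : S → ℝ := fun s => Finset.univ.sup' Finset.univ_nonempty (fun a' => Q s a') with hVdef
  have hB2 : ∀ s a, Q s a = R s a + γ * ∑ s', P s a s' * V s' := hBellman
  have hQleV : ∀ s a, Q s a ≤ V s := fun s a => Finset.le_sup' _ (Finset.mem_univ a)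
  have hVmem : ∀ s : S, ∃ a, V s = Q s a := by
    intro s
    obtain ⟨a, _, ha⟩ := Finset.exists_mem_eq_sup' Finset.univ_nonempty (fun a' => Q s a')
    exact ⟨a, ha⟩
  set D : ℝ := Finset.univ.sup' Finset.univ_nonempty
    (fun p : S × S × A => if E p.1 p.2.1 then Q p.1 p.2.2 - Q p.2.1 p.2.2 else 0) with hDdef
  have hDge : ∀ s t a, E s t → Q s a - Q t a ≤ D := by
    intro s t a h
    have := Finset.le_sup'
      (f := fun p : S × S × A => if E p.1 p.2.1 then Q p.1 p.2.2 - Q p.2.1 p.2.2 else 0)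
      (Finset.mem_univ (s, t, a))
    rwa [if_pos h] at this
  have hD0 : 0 ≤ D := by
    have := hDge s₀ s₀ a₀ (hE.refl s₀); linarith
  have hVD : ∀ s t, E s t → V s - V t ≤ D := by
    intro s t h
    obtain ⟨a, ha⟩ := hVmem s
    have h1 := hQleV t a
    have h2 := hDge s t a h
    linarith
  -- sums of P against E-invariant functions agree on related states
  have hsum : ∀ (g : S → ℝ), (∀ x y, E x y → g x = g y) →
      ∀ s t a, E s t → ∑ s', P s a s' * g s' = ∑ s', P t a s' * g s' := by
    intro g hg s t a h
    have maps : ∀ x ∈ (Finset.univ : Finset S), g x ∈ Finset.univ.image g :=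
      fun x _ => Finset.mem_image_of_mem g (Finset.mem_univ x)
    rw [← Finset.sum_fiberwise_of_maps_to maps (fun s' => P s a s' * g s'),
        ← Finset.sum_fiberwise_of_maps_to maps (fun s' => P t a s' * g s')]
    apply Finset.sum_congr rfl
    intro y _
    have hfib : ∀ x ∈ Finset.univ.filter (fun x => g x = y), g x = y :=
      fun x hx => (Finset.mem_filter.mp hx).2
    have hXs : ∑ x ∈ Finset.univ.filter (fun x => g x = y), P s a x
        = ∑ x ∈ Finset.univ.filter (fun x => g x = y), P t a x := by
      apply hP s t h a
      intro s' hs' t' h'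
      simp only [Finset.mem_filter, Finset.mem_univ, true_and] at hs' ⊢
      rw [← hg s' t' h']; exact hs'
    calc ∑ x ∈ Finset.univ.filter (fun x => g x = y), P s a x * g x
        = ∑ x ∈ Finset.univ.filter (fun x => g x = y), P s a x * y :=
          Finset.sum_congr rfl (fun x hx => by rw [hfib x hx])
      _ = (∑ x ∈ Finset.univ.filter (fun x => g x = y), P s a x) * y := by
          rw [Finset.sum_mul]
      _ = (∑ x ∈ Finset.univ.filter (fun x => g x = y), P t a x) * y := by rw [hXs]
      _ = ∑ x ∈ Finset.univ.filter (fun x => g x = y), P t a x * y := by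
          rw [Finset.sum_mul]
      _ = ∑ x ∈ Finset.univ.filter (fun x => g x = y), P t a x * g x :=
          Finset.sum_congr rfl (fun x hx => by rw [hfib x hx])
  -- the class-maximum of V
  have hmemcl : ∀ s : S, s ∈ Finset.univ.filter (fun u => E s u) := by
    intro s; simp [hE.refl s]
  set W : S → ℝ := fun s => (Finset.univ.filter (fun u => E s u)).sup' ⟨s, hmemcl s⟩ V
    with hWdef
  have hVleW : ∀ s, V s ≤ W s := fun s => Finset.le_sup' V (hmemcl s)
  have hWmem : ∀ s : S, ∃ u, E s u ∧ W s = V u := by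
    intro s
    obtain ⟨u, hu, hu2⟩ := Finset.exists_mem_eq_sup'
      (⟨s, hmemcl s⟩ : (Finset.univ.filter (fun u => E s u)).Nonempty) V
    refine ⟨u, ?_, hu2⟩
    simpa using hu
  have hWinv : ∀ x y, E x y → W x = W y := by
    intro x y h
    have hset : Finset.univ.filter (fun u => E x u) = Finset.univ.filter (fun u => E y u) := by
      ext u
      simp only [Finset.mem_filter, Finset.mem_univ, true_and]
      exact ⟨fun h' => hE.trans (hE.symm h) h', fun h' => hE.trans h h'⟩
    exact Finset.sup'_congr _ hset (fun _ _ => rfl)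
  have hWleVD : ∀ s, W s ≤ V s + D := by
    intro s
    obtain ⟨u, hu, hu2⟩ := hWmem s
    have := hVD u s (hE.symm hu)
    linarith
  -- contraction step
  have step : ∀ s t, E s t → ∀ a, Q s a - Q t a ≤ γ * D := by
    intro s t h a
    have e1 : ∑ s', P s a s' * V s' ≤ ∑ s', P s a s' * W s' :=
      Finset.sum_le_sum (fun s' _ => mul_le_mul_of_nonneg_left (hVleW s') (hP0 s a s'))
    have e2 : ∑ s', P s a s' * W s' = ∑ s', P t a s' * W s' := hsum W hWinv s t a h
    have e3 : ∑ s', P t a s' * W s' ≤ ∑ s', P t a s' * (V s' + D) :=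
      Finset.sum_le_sum (fun s' _ => mul_le_mul_of_nonneg_left (hWleVD s') (hP0 t a s'))
    have e4 : ∑ s', P t a s' * (V s' + D) = (∑ s', P t a s' * V s') + D := by
      simp only [mul_add, Finset.sum_add_distrib, ← Finset.sum_mul, hP1 t a, one_mul]
    have key : (∑ s', P s a s' * V s') - (∑ s', P t a s' * V s') ≤ D := by linarith
    have eq1 : Q s a - Q t a
        = γ * ((∑ s', P s a s' * V s') - ∑ s', P t a s' * V s') := by
      rw [hB2 s a, hB2 t a, hR s t h a]; ring
    rw [eq1]
    exact mul_le_mul_of_nonneg_left key hγ0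
  have hDle : D ≤ γ * D := by
    rw [hDdef]
    apply Finset.sup'_le
    intro p _
    by_cases h : E p.1 p.2.1
    · simpa [h] using step p.1 p.2.1 h p.2.2
    · simp only [h, if_false]
      exact mul_nonneg hγ0 hD0
  have hDneg : D ≤ 0 := by nlinarith
  have h1 := hDge s₀ t₀ a₀ hst₀
  have h2 := hDge t₀ s₀ a₀ (hE.symm hst₀)
  linarith
end
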